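/- arXiv:2403.04062 — 2 statements merged into one kernel-verified Lean document; each statement's English description precedes it below -/
import Mathlib

section
/- Let ξ : Ω → ℝ^n be a random vector, ξ̄ ∈ ℝ^n, P_ξ an n×n positive semidefinite matrix, and for j in a finite index set J let a_j ∈ ℝ^n, b_j ∈ ℝ. Assume for each j the real random variable a_jᵀξ has law gaussianReal(a_jᵀξ̄, a_jᵀP_ξ a_j). Let ε ∈ (0, 1/2) and ε_j > 0 with Σ_{j∈J} ε_j ≤ ε, and for each j let m_N(ε_j) satisfy (gaussianReal 0 1)(Iic m_N(ε_j)) = 1 − ε_j. If a_jᵀξ̄ + b_j + m_N(ε_j)·√(a_jᵀP_ξ a_j) ≤ 0 for every j ∈ J, then P[∀ j ∈ J, a_jᵀξ + b_j ≤ 0] ≥ 1 − ε. (Paper's Lemma 2.) -/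
open MeasureTheory ProbabilityTheory Matrix

lemma gauss_Iic_shift (μ : ℝ) (v : NNReal) (m : ℝ) :
    gaussianReal 0 1 (Set.Iic m) ≤ gaussianReal μ v (Set.Iic (μ + m * Real.sqrt v)) := by
  by_cases hv : v = 0
  · subst hv
    simp [gaussianReal_zero_var, Measure.dirac_apply' _ measurableSet_Iic]
    exact le_trans prob_le_one (by simp [Set.indicator_apply])
  · have hc : (0:ℝ) < Real.sqrt v := Real.sqrt_pos.mpr (by positivity)
    set c : ℝ := Real.sqrt v with hcdef
    have hmap1 : (gaussianReal 0 1).map (c * ·) = gaussianReal 0 v := by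
      rw [gaussianReal_map_const_mul]
      congr 1
      · ring
      · ext
        simp [hcdef, Real.sq_sqrt (v.coe_nonneg)]
    have hmap2 : (gaussianReal 0 v).map (· + μ) = gaussianReal μ v := by
      rw [gaussianReal_map_add_const]; rw [zero_add]
    have hmap : (gaussianReal 0 1).map (fun x => c * x + μ) = gaussianReal μ v := by
      have h := Measure.map_map (μ := gaussianReal 0 1)
        (g := fun x : ℝ => x + μ) (f := fun x : ℝ => c * x) (by fun_prop) (by fun_prop)
      rw [← hmap2, ← hmap1, h]
      rfl
    have hpre : (fun x => c * x + μ) ⁻¹' Set.Iic (μ + m * c) = Set.Iic m := by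
      ext x
      simp only [Set.mem_preimage, Set.mem_Iic]
      constructor
      · intro h
        nlinarith
      · intro h
        nlinarith
    rw [← hmap, Measure.map_apply (by fun_prop) measurableSet_Iic, hpre]

/-- Paper's Lemma 2: a joint Gaussian hyperplane chance constraint
`P[∀ j, a_jᵀξ + b_j ≤ 0] ≥ 1 - ε` is implied by the deterministic constraints
`a_jᵀξ̄ + b_j + m_N(ε_j)·√(a_jᵀP_ξ a_j) ≤ 0` with risk allocation `∑ j, ε_j ≤ ε`. -/
theorem gaussian_hyperplane_union_chance_constraint
    {Ω : Type*} [MeasurableSpace Ω] (P : Measure Ω) [IsProbabilityMeasure P]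
    {n : ℕ} {J : Type*} [Fintype J]
    (ξ : Ω → Fin n → ℝ) (ξbar : Fin n → ℝ)
    (Pξ : Matrix (Fin n) (Fin n) ℝ) (hPξ : Pξ.PosSemidef)
    (a : J → Fin n → ℝ) (b : J → ℝ)
    (v : J → NNReal) (hv : ∀ j, (v j : ℝ) = a j ⬝ᵥ (Pξ *ᵥ a j))
    (hlaw : ∀ j, P.map (fun ω => a j ⬝ᵥ ξ ω) = gaussianReal (a j ⬝ᵥ ξbar) (v j))
    (ε : ℝ) (hε : ε ∈ Set.Ioo (0 : ℝ) (1 / 2))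
    (εj : J → ℝ) (hεj : ∀ j, 0 < εj j) (hsum : ∑ j, εj j ≤ ε)
    (m : J → ℝ) (hm : ∀ j, gaussianReal 0 1 (Set.Iic (m j)) = ENNReal.ofReal (1 - εj j))
    (hconv : ∀ j, a j ⬝ᵥ ξbar + b j + m j * Real.sqrt (a j ⬝ᵥ (Pξ *ᵥ a j)) ≤ 0) :
    P {ω | ∀ j, a j ⬝ᵥ ξ ω + b j ≤ 0} ≥ ENNReal.ofReal (1 - ε) := by
  set f : J → Ω → ℝ := fun j ω => a j ⬝ᵥ ξ ω with hf
  have hεj1 : ∀ j, εj j ≤ ε := by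
    intro j
    calc εj j ≤ ∑ i, εj i := Finset.single_le_sum (fun i _ => (hεj i).le) (Finset.mem_univ j)
    _ ≤ ε := hsum
  have hmeas : ∀ j, AEMeasurable (f j) P := fun j =>
    aemeasurable_of_map_neZero (by rw [hlaw j]; infer_instance)
  -- key per-constraint bound
  have hbad : ∀ j, P (f j ⁻¹' Set.Ioi (-(b j))) ≤ ENNReal.ofReal (εj j) := by
    intro j
    have hIic : ENNReal.ofReal (1 - εj j) ≤ P (f j ⁻¹' Set.Iic (-(b j))) := by
      rw [← Measure.map_apply_of_aemeasurable (hmeas j) measurableSet_Iic, hlaw j, ← hm j]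
      refine le_trans (gauss_Iic_shift (a j ⬝ᵥ ξbar) (v j) (m j)) (measure_mono ?_)
      apply Set.Iic_subset_Iic.mpr
      have := hconv j
      rw [← hv j] at this
      linarith
    have hcompl : P (f j ⁻¹' Set.Ioi (-(b j))) + P (f j ⁻¹' Set.Iic (-(b j))) = 1 := by
      have hd : Disjoint (f j ⁻¹' Set.Ioi (-(b j))) (f j ⁻¹' Set.Iic (-(b j))) := by
        rw [Set.disjoint_iff]
        rintro x ⟨h1, h2⟩
        simp only [Set.mem_preimage, Set.mem_Ioi, Set.mem_Iic] at h1 h2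
        linarith
      rw [← measure_union₀ ((hmeas j).nullMeasurable measurableSet_Iic) hd.aedisjoint,
        ← Set.preimage_union]
      have : Set.Ioi (-(b j)) ∪ Set.Iic (-(b j)) = Set.univ := by
        ext x; simpa using lt_or_le (-(b j)) x
      simp [this]
    have h1 : ENNReal.ofReal (εj j) + ENNReal.ofReal (1 - εj j) = 1 := by
      rw [← ENNReal.ofReal_add (hεj j).le (by linarith [hεj1 j, hε.2])]
      norm_num
    calc P (f j ⁻¹' Set.Ioi (-(b j))) = 1 - P (f j ⁻¹' Set.Iic (-(b j))) := by
          rw [← hcompl, ENNReal.add_sub_cancel_right (measure_ne_top _ _)]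
    _ ≤ 1 - ENNReal.ofReal (1 - εj j) := tsub_le_tsub_left hIic _
    _ = ENNReal.ofReal (εj j) := by
          rw [← h1, ENNReal.add_sub_cancel_right ENNReal.ofReal_ne_top]
  set S : Set Ω := {ω | ∀ j, a j ⬝ᵥ ξ ω + b j ≤ 0} with hS
  have hSdef : S = ⋂ j, f j ⁻¹' Set.Iic (-(b j)) := by
    ext ω; simp [hS, hf, Set.mem_iInter]
    constructor <;> intro h j <;> have := h j <;> linarith
  have hSnm : NullMeasurableSet S P := by
    rw [hSdef]
    exact NullMeasurableSet.iInter fun j => (hmeas j).nullMeasurable measurableSet_Iic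
  have hScompl : Sᶜ ⊆ ⋃ j, f j ⁻¹' Set.Ioi (-(b j)) := by
    intro ω hω
    simp only [hS, Set.mem_compl_iff, Set.mem_setOf_eq, not_forall] at hω
    obtain ⟨j, hj⟩ := hω
    exact Set.mem_iUnion.mpr ⟨j, by simp [hf]; linarith [not_le.mp hj]⟩
  have hPc : P Sᶜ ≤ ENNReal.ofReal ε := by
    calc P Sᶜ ≤ P (⋃ j, f j ⁻¹' Set.Ioi (-(b j))) := measure_mono hScompl
    _ ≤ ∑ j, P (f j ⁻¹' Set.Ioi (-(b j))) := measure_iUnion_fintype_le _ _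
    _ ≤ ∑ j, ENNReal.ofReal (εj j) := Finset.sum_le_sum fun j _ => hbad j
    _ = ENNReal.ofReal (∑ j, εj j) := by
        rw [ENNReal.ofReal_sum_of_nonneg fun j _ => (hεj j).le]
    _ ≤ ENNReal.ofReal ε := ENNReal.ofReal_le_ofReal hsum
  have hadd : P S + P Sᶜ = 1 := by
    rw [measure_add_measure_compl₀ hSnm, measure_univ]
  calc ENNReal.ofReal (1 - ε) = 1 - ENNReal.ofReal ε := by
        rw [ENNReal.ofReal_sub _ hε.1.le, ENNReal.ofReal_one]
  _ ≤ 1 - P Sᶜ := tsub_le_tsub_left hPc _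
  _ ≤ P S := by
        rw [← hadd, ENNReal.add_sub_cancel_right (measure_ne_top _ _)]
end

section
/- Let N ∈ ℕ and for each k ∈ Fin N let u_k := ū_k + M_k v_k where ū_k ∈ E (a normed real vector space), M_k : E →L[ℝ] E, and v_k : Ω → E is a random vector with P[‖v_k‖ ≤ m] ≥ p for a fixed p ∈ (0,1) and m ≥ 0. Then for any weights Δt_k ≥ 0, the discrete-time quantile cost satisfies Σ_{k} Q_{‖u_k‖}(p) · Δt_k ≤ Σ_{k} (‖ū_k‖ + m·‖M_k‖) · Δt_k, i.e., the convex surrogate cost J_ub is an upper bound on the quantile cost J. (Paper's bound J ≤ J_ub, Eq. (48), obtained by applying Lemma 4 termwise.) -/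
open MeasureTheory

/-- Paper's bound `J ≤ J_ub` (Eq. (48)): the discrete-time quantile cost
`∑ k, Q_{‖u_k‖}(p) · Δt_k` is bounded above by the convex surrogate
`∑ k, (‖ū_k‖ + m·‖M_k‖) · Δt_k`, obtained by applying Lemma 4 termwise. -/
theorem quantile_cost_upper_bound
    {Ω E : Type*} [MeasurableSpace Ω] [NormedAddCommGroup E] [NormedSpace ℝ E]
    (P : Measure Ω) [IsProbabilityMeasure P] (N : ℕ)
    (ubar : Fin N → E) (M : Fin N → E →L[ℝ] E) (v : Fin N → Ω → E)
    (u : Fin N → Ω → E) (hu : ∀ k ω, u k ω = ubar k + (M k) (v k ω))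
    (p m : ℝ) (hp : p ∈ Set.Ioo (0 : ℝ) 1) (hm : 0 ≤ m)
    (hv : ∀ k, P {ω | ‖v k ω‖ ≤ m} ≥ ENNReal.ofReal p)
    (Δt : Fin N → ℝ) (hΔt : ∀ k, 0 ≤ Δt k) :
    ∑ k, (sInf {a : ℝ | P {ω | ‖u k ω‖ ≤ a} ≥ ENNReal.ofReal p}) * Δt k ≤
      ∑ k, (‖ubar k‖ + m * ‖M k‖) * Δt k := by
  refine Finset.sum_le_sum fun k _ => ?_
  refine mul_le_mul_of_nonneg_right ?_ (hΔt k)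
  have hp0 : (0 : ENNReal) < ENNReal.ofReal p := by
    simpa using ENNReal.ofReal_pos.mpr hp.1
  have hmem : (‖ubar k‖ + m * ‖M k‖) ∈
      {a : ℝ | P {ω | ‖u k ω‖ ≤ a} ≥ ENNReal.ofReal p} := by
    refine le_trans (hv k) (measure_mono fun ω hω => ?_)
    simp only [Set.mem_setOf_eq] at *
    calc ‖u k ω‖ ≤ ‖ubar k‖ + ‖(M k) (v k ω)‖ := by
          rw [hu k ω]; exact norm_add_le _ _
      _ ≤ ‖ubar k‖ + ‖M k‖ * ‖v k ω‖ := by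
          gcongr; exact (M k).le_opNorm _
      _ ≤ ‖ubar k‖ + m * ‖M k‖ := by
          rw [mul_comm m]; gcongr
  have hbdd : BddBelow {a : ℝ | P {ω | ‖u k ω‖ ≤ a} ≥ ENNReal.ofReal p} := by
    refine ⟨0, fun a ha => ?_⟩
    by_contra h
    push_neg at h
    have : {ω | ‖u k ω‖ ≤ a} = ∅ := by
      ext ω; simp only [Set.mem_setOf_eq, Set.mem_empty_iff_false, iff_false]
      exact fun hle => absurd (le_trans (norm_nonneg _) hle) (not_le.mpr h)
    simp only [Set.mem_setOf_eq, this, measure_empty] at ha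
    exact absurd ha (not_le.mpr hp0)
  exact csInf_le hbdd hmem
end
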